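/- Let w be a word of length n ≥ 1 with last letter h = w_n. For any letter a, the word w·a avoids both patterns 2-11 and 1-22 if and only if w avoids both patterns and, in addition, either a ≠ h, or every letter among w_1,...,w_{n-1} is equal to h. -/
import Mathlib


/-- `w` contains the generalized pattern 2-11: ∃ i < j < n with w i > w j = w (j+1). -/
def Contains211 {n m : ℕ} (w : Fin n → Fin m) : Prop :=
  ∃ i j k : Fin n, i < j ∧ (j : ℕ) + 1 = (k : ℕ) ∧ w j < w i ∧ w j = w k

/-- `w` contains the generalized pattern 1-22: ∃ i < j < n with w i < w j = w (j+1). -/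
def Contains122 {n m : ℕ} (w : Fin n → Fin m) : Prop :=
  ∃ i j k : Fin n, i < j ∧ (j : ℕ) + 1 = (k : ℕ) ∧ w i < w j ∧ w j = w k

theorem appending_avoids_211_122 {n m : ℕ} (hn : 1 ≤ n) (w : Fin n → Fin m) (a : Fin m)
    (h : Fin m) (hh : h = w ⟨n - 1, by omega⟩) :
    (¬ Contains211 (Fin.snoc w a) ∧ ¬ Contains122 (Fin.snoc w a)) ↔
      ((¬ Contains211 w ∧ ¬ Contains122 w) ∧
        (a ≠ h ∨ ∀ i : Fin n, (i : ℕ) < n - 1 → w i = h)) := by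
  constructor
  · rintro ⟨h1, h2⟩
    refine ⟨⟨?_, ?_⟩, ?_⟩
    · rintro ⟨i, j, k, hij, hjk, hlt, heq⟩
      exact h1 ⟨i.castSucc, j.castSucc, k.castSucc, by simpa using hij, by simpa using hjk,
        by simpa [Fin.snoc_castSucc] using hlt, by simpa [Fin.snoc_castSucc] using heq⟩
    · rintro ⟨i, j, k, hij, hjk, hlt, heq⟩
      exact h2 ⟨i.castSucc, j.castSucc, k.castSucc, by simpa using hij, by simpa using hjk,
        by simpa [Fin.snoc_castSucc] using hlt, by simpa [Fin.snoc_castSucc] using heq⟩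
    · by_cases ha : a = h
      · right
        intro i hi
        by_contra hne
        rcases lt_or_gt_of_ne hne with hlt | hgt
        · refine h2 ⟨i.castSucc, Fin.castSucc ⟨n - 1, by omega⟩, Fin.last n, ?_, ?_, ?_, ?_⟩
          · simpa [Fin.lt_def] using hi
          · simp; omega
          · rw [Fin.snoc_castSucc, Fin.snoc_castSucc]
            exact lt_of_lt_of_eq hlt hh
          · rw [Fin.snoc_castSucc, Fin.snoc_last]
            exact (hh ▸ ha).symm
        · refine h1 ⟨i.castSucc, Fin.castSucc ⟨n - 1, by omega⟩, Fin.last n, ?_, ?_, ?_, ?_⟩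
          · simpa [Fin.lt_def] using hi
          · simp; omega
          · rw [Fin.snoc_castSucc, Fin.snoc_castSucc]
            exact lt_of_eq_of_lt hh.symm hgt
          · rw [Fin.snoc_castSucc, Fin.snoc_last]
            exact (hh ▸ ha).symm
      · left; exact ha
  · rintro ⟨⟨h1, h2⟩, hcond⟩
    constructor
    · rintro ⟨i, j, k, hij, hjk, hlt, heq⟩
      by_cases hk : (k : ℕ) < n
      · have hj : (j : ℕ) < n := by omega
        have hij' : (i : ℕ) < (j : ℕ) := hij
        have hi : (i : ℕ) < n := by omega
        have ei : i = Fin.castSucc ⟨(i : ℕ), hi⟩ := Fin.ext rfl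
        have ej : j = Fin.castSucc ⟨(j : ℕ), hj⟩ := Fin.ext rfl
        have ek : k = Fin.castSucc ⟨(k : ℕ), hk⟩ := Fin.ext rfl
        rw [ei] at hlt
        rw [ej] at hlt heq
        rw [ek] at heq
        rw [Fin.snoc_castSucc, Fin.snoc_castSucc] at hlt
        rw [Fin.snoc_castSucc, Fin.snoc_castSucc] at heq
        exact h1 ⟨⟨(i:ℕ), hi⟩, ⟨(j:ℕ), hj⟩, ⟨(k:ℕ), hk⟩, Fin.mk_lt_mk.mpr hij',
          hjk, hlt, heq⟩
      · have hk' : (k : ℕ) = n := by omega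
        have hj : (j : ℕ) = n - 1 := by omega
        have hij' : (i : ℕ) < (j : ℕ) := hij
        have hi : (i : ℕ) < n - 1 := by omega
        have hi2 : (i : ℕ) < n := by omega
        have ei : i = Fin.castSucc ⟨(i : ℕ), hi2⟩ := Fin.ext rfl
        have ej : j = Fin.castSucc ⟨n - 1, Nat.sub_lt hn Nat.one_pos⟩ := Fin.ext (by simpa using hj)
        have ek : k = Fin.last n := Fin.ext (by simpa using hk')
        rw [ei] at hlt
        rw [ej] at hlt heq
        rw [ek] at heq
        rw [Fin.snoc_castSucc, Fin.snoc_castSucc] at hlt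
        rw [Fin.snoc_castSucc, Fin.snoc_last] at heq
        rcases hcond with hne | hall
        · exact hne (heq ▸ hh).symm
        · have := hall ⟨(i:ℕ), hi2⟩ hi
          have hwn : w ⟨n - 1, Nat.sub_lt hn Nat.one_pos⟩ = h := hh.symm
          rw [this, hwn] at hlt
          exact lt_irrefl _ hlt
    · rintro ⟨i, j, k, hij, hjk, hlt, heq⟩
      by_cases hk : (k : ℕ) < n
      · have hj : (j : ℕ) < n := by omega
        have hij' : (i : ℕ) < (j : ℕ) := hij
        have hi : (i : ℕ) < n := by omega
        have ei : i = Fin.castSucc ⟨(i : ℕ), hi⟩ := Fin.ext rfl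
        have ej : j = Fin.castSucc ⟨(j : ℕ), hj⟩ := Fin.ext rfl
        have ek : k = Fin.castSucc ⟨(k : ℕ), hk⟩ := Fin.ext rfl
        rw [ei] at hlt
        rw [ej] at hlt heq
        rw [ek] at heq
        rw [Fin.snoc_castSucc, Fin.snoc_castSucc] at hlt
        rw [Fin.snoc_castSucc, Fin.snoc_castSucc] at heq
        exact h2 ⟨⟨(i:ℕ), hi⟩, ⟨(j:ℕ), hj⟩, ⟨(k:ℕ), hk⟩, Fin.mk_lt_mk.mpr hij',
          hjk, hlt, heq⟩
      · have hk' : (k : ℕ) = n := by omega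
        have hj : (j : ℕ) = n - 1 := by omega
        have hij' : (i : ℕ) < (j : ℕ) := hij
        have hi : (i : ℕ) < n - 1 := by omega
        have hi2 : (i : ℕ) < n := by omega
        have ei : i = Fin.castSucc ⟨(i : ℕ), hi2⟩ := Fin.ext rfl
        have ej : j = Fin.castSucc ⟨n - 1, Nat.sub_lt hn Nat.one_pos⟩ := Fin.ext (by simpa using hj)
        have ek : k = Fin.last n := Fin.ext (by simpa using hk')
        rw [ei] at hlt
        rw [ej] at hlt heq
        rw [ek] at heq
        rw [Fin.snoc_castSucc, Fin.snoc_castSucc] at hlt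
        rw [Fin.snoc_castSucc, Fin.snoc_last] at heq
        rcases hcond with hne | hall
        · exact hne (heq ▸ hh).symm
        · have := hall ⟨(i:ℕ), hi2⟩ hi
          have hwn : w ⟨n - 1, Nat.sub_lt hn Nat.one_pos⟩ = h := hh.symm
          rw [this, hwn] at hlt
          exact lt_irrefl _ hlt
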